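/- Let Ω = ℝ × [−1,1] ⊂ ℝ² with coordinates (y, σ). Let f : ℝ² → ℝ be smooth, with support contained in K × [−1,1] for some compact K ⊂ ℝ, and such that f(y, 1) = f(y, −1) = 0 for all y. Then 2 ∫_Ω (−Δf)·( y ∂_y f + σ ∂_σ f + f ) dy dσ = 2 ∫_Ω ( (∂_y f)² + (∂_σ f)² ) dy dσ − ∫_ℝ ( (∂_σ f)²(y, 1) + (∂_σ f)²(y, −1) ) dy, where Δf = ∂_y²f + ∂_σ²f. -/

import Mathlib

open MeasureTheory intervalIntegral

open ContDiff

/-- Partial derivative in the first (longitudinal) variable `y`. -/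
noncomputable def dY (f : ℝ → ℝ → ℝ) : ℝ → ℝ → ℝ :=
  fun y σ => deriv (fun y' => f y' σ) y

/-- Partial derivative in the second (transverse) variable `σ`. -/
noncomputable def dS (f : ℝ → ℝ → ℝ) : ℝ → ℝ → ℝ :=
  fun y σ => deriv (fun σ' => f y σ') σ

namespace S8

noncomputable def U (g : ℝ → ℝ → ℝ) : ℝ × ℝ → ℝ := fun p => g p.1 p.2

variable {g f : ℝ → ℝ → ℝ}

lemma lineY_hasDerivAt (σ y : ℝ) : HasDerivAt (fun t : ℝ => ((t, σ) : ℝ × ℝ)) (1, 0) y :=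
  (hasDerivAt_id y).prodMk (hasDerivAt_const y σ)

lemma lineS_hasDerivAt (y σ : ℝ) : HasDerivAt (fun τ : ℝ => ((y, τ) : ℝ × ℝ)) (0, 1) σ :=
  (hasDerivAt_const σ y).prodMk (hasDerivAt_id σ)

lemma dY_eq (hg : ContDiff ℝ ∞ (U g)) (y σ : ℝ) :
    dY g y σ = fderiv ℝ (U g) (y, σ) (1, 0) :=
  (((hg.differentiable (by simp) (y, σ)).hasFDerivAt).comp_hasDerivAt (l := U g) y
    (lineY_hasDerivAt σ y)).deriv

lemma dS_eq (hg : ContDiff ℝ ∞ (U g)) (y σ : ℝ) :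
    dS g y σ = fderiv ℝ (U g) (y, σ) (0, 1) :=
  (((hg.differentiable (by simp) (y, σ)).hasFDerivAt).comp_hasDerivAt (l := U g) σ
    (lineS_hasDerivAt y σ)).deriv

lemma hY (hg : ContDiff ℝ ∞ (U g)) (y σ : ℝ) :
    HasDerivAt (fun t => g t σ) (dY g y σ) y := by
  rw [dY_eq hg]
  exact ((hg.differentiable (by simp) (y, σ)).hasFDerivAt).comp_hasDerivAt y
    (lineY_hasDerivAt σ y)

lemma hS (hg : ContDiff ℝ ∞ (U g)) (y σ : ℝ) :
    HasDerivAt (fun τ => g y τ) (dS g y σ) σ := by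
  rw [dS_eq hg]
  exact ((hg.differentiable (by simp) (y, σ)).hasFDerivAt).comp_hasDerivAt σ
    (lineS_hasDerivAt y σ)

lemma smooth_pd (hg : ContDiff ℝ ∞ (U g)) (v : ℝ × ℝ) :
    ContDiff ℝ ∞ (fun p => fderiv ℝ (U g) p v) :=
  (hg.fderiv_right (by simp)).clm_apply contDiff_const

lemma smooth_dY (hg : ContDiff ℝ ∞ (U g)) : ContDiff ℝ ∞ (U (dY g)) := by
  have h : U (dY g) = fun p => fderiv ℝ (U g) p (1, 0) := by
    funext p; exact dY_eq hg p.1 p.2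
  rw [h]; exact smooth_pd hg _

lemma smooth_dS (hg : ContDiff ℝ ∞ (U g)) : ContDiff ℝ ∞ (U (dS g)) := by
  have h : U (dS g) = fun p => fderiv ℝ (U g) p (0, 1) := by
    funext p; exact dS_eq hg p.1 p.2
  rw [h]; exact smooth_pd hg _

lemma dYdS_eq (hg : ContDiff ℝ ∞ (U g)) (y σ : ℝ) :
    dY (dS g) y σ = fderiv ℝ (fderiv ℝ (U g)) (y, σ) (1, 0) (0, 1) := by
  have hdf : ContDiff ℝ ∞ (fderiv ℝ (U g)) := hg.fderiv_right (by simp)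
  have H : HasFDerivAt (fderiv ℝ (U g)) (fderiv ℝ (fderiv ℝ (U g)) (y, σ)) (y, σ) :=
    (hdf.differentiable (by simp) _).hasFDerivAt
  have h1 : HasDerivAt (fun t => fderiv ℝ (U g) (t, σ))
      (fderiv ℝ (fderiv ℝ (U g)) (y, σ) (1, 0)) y :=
    H.comp_hasDerivAt y (lineY_hasDerivAt σ y)
  have h2 := h1.clm_apply (hasDerivAt_const y (((0 : ℝ), (1 : ℝ)) : ℝ × ℝ))
  simp only [map_zero, add_zero] at h2
  have he : (fun t => dS g t σ) = fun t => fderiv ℝ (U g) (t, σ) (0, 1) :=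
    funext fun t => dS_eq hg t σ
  show deriv (fun t => dS g t σ) y = _
  rw [he]; exact h2.deriv

lemma dSdY_eq (hg : ContDiff ℝ ∞ (U g)) (y σ : ℝ) :
    dS (dY g) y σ = fderiv ℝ (fderiv ℝ (U g)) (y, σ) (0, 1) (1, 0) := by
  have hdf : ContDiff ℝ ∞ (fderiv ℝ (U g)) := hg.fderiv_right (by simp)
  have H : HasFDerivAt (fderiv ℝ (U g)) (fderiv ℝ (fderiv ℝ (U g)) (y, σ)) (y, σ) :=
    (hdf.differentiable (by simp) _).hasFDerivAt
  have h1 : HasDerivAt (fun τ => fderiv ℝ (U g) (y, τ))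
      (fderiv ℝ (fderiv ℝ (U g)) (y, σ) (0, 1)) σ :=
    H.comp_hasDerivAt σ (lineS_hasDerivAt y σ)
  have h2 := h1.clm_apply (hasDerivAt_const σ (((1 : ℝ), (0 : ℝ)) : ℝ × ℝ))
  simp only [map_zero, add_zero] at h2
  have he : (fun τ => dY g y τ) = fun τ => fderiv ℝ (U g) (y, τ) (1, 0) :=
    funext fun τ => dY_eq hg y τ
  show deriv (fun τ => dY g y τ) σ = _
  rw [he]; exact h2.deriv

lemma clairaut (hg : ContDiff ℝ ∞ (U g)) (y σ : ℝ) :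
    dY (dS g) y σ = dS (dY g) y σ := by
  rw [dYdS_eq hg, dSdY_eq hg]
  exact (hg.contDiffAt.isSymmSndFDerivAt (by simp; exact WithTop.coe_le_coe.2 le_top)) _ _

lemma contY (hg : ContDiff ℝ ∞ (U g)) (σ : ℝ) : Continuous (fun t => g t σ) :=
  hg.continuous.comp (continuous_id.prodMk continuous_const)

lemma contS (hg : ContDiff ℝ ∞ (U g)) (y : ℝ) : Continuous (fun τ => g y τ) :=
  hg.continuous.comp (continuous_const.prodMk continuous_id)

lemma cdY (hg : ContDiff ℝ ∞ (U g)) (σ : ℝ) : ContDiff ℝ ∞ (fun t => g t σ) :=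
  hg.comp (contDiff_id.prodMk contDiff_const)

lemma deriv_eventually_zero {h : ℝ → ℝ} {x : ℝ} (hx : ∀ᶠ t in nhds x, h t = 0) :
    deriv h x = 0 := by
  have h0 : deriv h x = deriv (fun _ : ℝ => (0:ℝ)) x :=
    Filter.EventuallyEq.deriv_eq hx
  simpa using h0

lemma integral_deriv_zero {p : ℝ → ℝ} (hp : ContDiff ℝ 1 p) (hc : HasCompactSupport p) :
    (∫ x, deriv p x) = 0 := by
  have hd : Continuous (deriv p) := hp.continuous_deriv le_rfl
  have hcd : HasCompactSupport (deriv p) := hc.deriv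
  have hint : Integrable (deriv p) := hd.integrable_of_hasCompactSupport hcd
  have h1 := hc.integral_Iic_deriv_eq hp 0
  have h2 := hc.integral_Ioi_deriv_eq hp 0
  rw [← integral_Iic_add_Ioi hint.integrableOn hint.integrableOn, h1, h2]; ring

lemma prodInt (W : ℝ × ℝ → ℝ) (hc : Continuous W) (K : Set ℝ) (hK : IsCompact K)
    (hvan : ∀ p : ℝ × ℝ, W p ≠ 0 → p.1 ∈ K ∧ p.2 ∈ Set.Icc (-1:ℝ) 1) :
    Integrable W ((volume : Measure ℝ).prod (volume.restrict (Set.Ioc (-1:ℝ) 1))) := by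
  have hW : HasCompactSupport W := HasCompactSupport.intro (hK.prod isCompact_Icc)
    (fun p hp => by_contra fun h => hp (Set.mem_prod.2 (hvan p h)))
  have h2 : Integrable W ((volume : Measure ℝ).prod (volume : Measure ℝ)) :=
    hc.integrable_of_hasCompactSupport hW
  have he : (volume : Measure ℝ).prod (volume.restrict (Set.Ioc (-1:ℝ) 1))
      = ((volume : Measure ℝ).prod (volume : Measure ℝ)).restrict
          (Set.univ ×ˢ Set.Ioc (-1:ℝ) 1) := by
    rw [← Measure.prod_restrict, Measure.restrict_univ]
  rw [he]
  exact h2.restrict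

noncomputable def Pf (f : ℝ → ℝ → ℝ) (y σ : ℝ) : ℝ :=
  y * ((dY f y σ)^2 + (dS f y σ)^2)
    - 2 * dY f y σ * (y * dY f y σ + σ * dS f y σ + f y σ)

noncomputable def Qf (f : ℝ → ℝ → ℝ) (y σ : ℝ) : ℝ :=
  σ * ((dY f y σ)^2 + (dS f y σ)^2)
    - 2 * dS f y σ * (y * dY f y σ + σ * dS f y σ + f y σ)

noncomputable def PYf (f : ℝ → ℝ → ℝ) (y σ : ℝ) : ℝ :=
  ((dY f y σ)^2 + (dS f y σ)^2)
    + y * (2 * dY f y σ * dY (dY f) y σ + 2 * dS f y σ * dY (dS f) y σ)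
    - 2 * (dY (dY f) y σ * (y * dY f y σ + σ * dS f y σ + f y σ)
        + dY f y σ * (2 * dY f y σ + y * dY (dY f) y σ + σ * dY (dS f) y σ))

noncomputable def QSf (f : ℝ → ℝ → ℝ) (y σ : ℝ) : ℝ :=
  ((dY f y σ)^2 + (dS f y σ)^2)
    + σ * (2 * dY f y σ * dS (dY f) y σ + 2 * dS f y σ * dS (dS f) y σ)
    - 2 * (dS (dS f) y σ * (y * dY f y σ + σ * dS f y σ + f y σ)
        + dS f y σ * (y * dS (dY f) y σ + 2 * dS f y σ + σ * dS (dS f) y σ))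

lemma hasDerivAt_P (hUf : ContDiff ℝ ∞ (U f)) (y σ : ℝ) :
    HasDerivAt (fun t => Pf f t σ) (PYf f y σ) y := by
  have h1 := smooth_dY hUf
  have h2 := smooth_dS hUf
  have hu := hY hUf y σ
  have huy := hY h1 y σ
  have hus := hY h2 y σ
  have hv : HasDerivAt (fun t => t * dY f t σ + σ * dS f t σ + f t σ)
      (1 * dY f y σ + y * dY (dY f) y σ + σ * dY (dS f) y σ + dY f y σ) y :=
    (((hasDerivAt_id y).mul huy).add (hus.const_mul σ)).add hu
  have hP := HasDerivAt.sub (HasDerivAt.mul (hasDerivAt_id y) (HasDerivAt.add (HasDerivAt.pow huy 2) (HasDerivAt.pow hus 2)))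
      (HasDerivAt.mul ((huy.const_mul 2)) hv)
  refine HasDerivAt.congr_deriv hP ?_
  simp only [PYf, id_eq, pow_one, Nat.cast_ofNat, Pi.add_apply, Pi.pow_apply]
  push_cast
  ring

lemma hasDerivAt_Q (hUf : ContDiff ℝ ∞ (U f)) (y σ : ℝ) :
    HasDerivAt (fun τ => Qf f y τ) (QSf f y σ) σ := by
  have h1 := smooth_dY hUf
  have h2 := smooth_dS hUf
  have hu := hS hUf y σ
  have huy := hS h1 y σ
  have hus := hS h2 y σ
  have hv : HasDerivAt (fun τ => y * dY f y τ + τ * dS f y τ + f y τ)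
      (y * dS (dY f) y σ + (1 * dS f y σ + σ * dS (dS f) y σ) + dS f y σ) σ :=
    ((huy.const_mul y).add ((hasDerivAt_id σ).mul hus)).add hu
  have hQ := HasDerivAt.sub (HasDerivAt.mul (hasDerivAt_id σ) (HasDerivAt.add (HasDerivAt.pow huy 2) (HasDerivAt.pow hus 2)))
      (HasDerivAt.mul ((hus.const_mul 2)) hv)
  refine HasDerivAt.congr_deriv hQ ?_
  simp only [QSf, id_eq, pow_one, Nat.cast_ofNat, Pi.add_apply, Pi.pow_apply]
  push_cast
  ring

lemma pointwise (hUf : ContDiff ℝ ∞ (U f)) (y σ : ℝ) :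
    2 * ((-(dY (dY f) y σ + dS (dS f) y σ)) * (y * dY f y σ + σ * dS f y σ + f y σ))
      = 2 * ((dY f y σ)^2 + (dS f y σ)^2) + PYf f y σ + QSf f y σ := by
  have hc := clairaut hUf y σ
  simp only [PYf, QSf, hc]; ring

end S8

/-- the quadratic form of the commutator `[Δ_D, iA₁]` of the Dirichlet
Laplacian on the two-dimensional waveguide `Ω = ℝ × [−1,1]` with the generator of
dilations in all directions, on a smooth real function supported in `K × [−1,1]` and
vanishing on the lateral boundary:
`2∫_Ω (−Δf)(y∂_y f + σ∂_σ f + f) = 2∫_Ω ((∂_y f)² + (∂_σ f)²)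
  − ∫_ℝ ((∂_σ f)²(y,1) + (∂_σ f)²(y,−1)) dy`. -/
theorem statement8 (f : ℝ → ℝ → ℝ)
    (hf : ContDiff ℝ (⊤ : ℕ∞) (fun p : ℝ × ℝ => f p.1 p.2))
    (K : Set ℝ) (hK : IsCompact K)
    (hsupp : ∀ y σ, f y σ ≠ 0 → y ∈ K ∧ σ ∈ Set.Icc (-1 : ℝ) 1)
    (hbd : ∀ y, f y 1 = 0 ∧ f y (-1) = 0) :
    2 * (∫ y : ℝ, ∫ σ in (-1 : ℝ)..1,
        (-(dY (dY f) y σ + dS (dS f) y σ)) * (y * dY f y σ + σ * dS f y σ + f y σ))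
      = 2 * (∫ y : ℝ, ∫ σ in (-1 : ℝ)..1, ((dY f y σ) ^ 2 + (dS f y σ) ^ 2))
        - ∫ y : ℝ, ((dS f y 1) ^ 2 + (dS f y (-1)) ^ 2) := by

  have hUf : ContDiff ℝ ∞ (S8.U f) := hf.of_le (by simp)
  have h1 : ContDiff ℝ ∞ (S8.U (dY f)) := S8.smooth_dY hUf
  have h2 : ContDiff ℝ ∞ (S8.U (dS f)) := S8.smooth_dS hUf
  have h11 := S8.smooth_dY h1
  have h12 := S8.smooth_dS h1
  have h21 := S8.smooth_dY h2
  have h22 := S8.smooth_dS h2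
  -- vanishing of f off the support box
  have hyK : ∀ {y σ : ℝ}, y ∉ K → f y σ = 0 := by
    intro y σ hy; by_contra h; exact hy (hsupp y σ h).1
  have hsI : ∀ {y σ : ℝ}, σ ∉ Set.Icc (-1:ℝ) 1 → f y σ = 0 := by
    intro y σ hσ; by_contra h; exact hσ (hsupp y σ h).2
  have hKopen : IsOpen Kᶜ := hK.isClosed.isOpen_compl
  have hIopen : IsOpen (Set.Icc (-1:ℝ) 1)ᶜ := isClosed_Icc.isOpen_compl
  -- first derivatives vanish off the box
  have hdYK : ∀ {y : ℝ}, y ∉ K → ∀ σ, dY f y σ = 0 := fun {y} hy σ =>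
    S8.deriv_eventually_zero (by
      filter_upwards [hKopen.mem_nhds hy] with t ht using hyK ht)
  have hdSK : ∀ {y : ℝ}, y ∉ K → ∀ σ, dS f y σ = 0 := by
    intro y hy σ
    have e : (fun τ => f y τ) = fun _ => (0:ℝ) := funext fun τ => hyK hy
    show deriv (fun τ => f y τ) σ = 0
    rw [e]; simp
  have hdYI : ∀ {σ : ℝ}, σ ∉ Set.Icc (-1:ℝ) 1 → ∀ y, dY f y σ = 0 := by
    intro σ hσ y
    have e : (fun t => f t σ) = fun _ => (0:ℝ) := funext fun t => hsI hσ
    show deriv (fun t => f t σ) y = 0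
    rw [e]; simp
  have hdSI : ∀ {σ : ℝ}, σ ∉ Set.Icc (-1:ℝ) 1 → ∀ y, dS f y σ = 0 := fun {σ} hσ y =>
    S8.deriv_eventually_zero (by
      filter_upwards [hIopen.mem_nhds hσ] with τ hτ using hsI hτ)
  -- second derivatives vanish off the box
  have hdYYK : ∀ {y : ℝ}, y ∉ K → ∀ σ, dY (dY f) y σ = 0 := fun {y} hy σ =>
    S8.deriv_eventually_zero (by
      filter_upwards [hKopen.mem_nhds hy] with t ht using hdYK ht σ)
  have hdYSK : ∀ {y : ℝ}, y ∉ K → ∀ σ, dY (dS f) y σ = 0 := fun {y} hy σ =>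
    S8.deriv_eventually_zero (by
      filter_upwards [hKopen.mem_nhds hy] with t ht using hdSK ht σ)
  have hdSYK : ∀ {y : ℝ}, y ∉ K → ∀ σ, dS (dY f) y σ = 0 := by
    intro y hy σ
    have e : (fun τ => dY f y τ) = fun _ => (0:ℝ) := funext fun τ => hdYK hy τ
    show deriv (fun τ => dY f y τ) σ = 0
    rw [e]; simp
  have hdSSK : ∀ {y : ℝ}, y ∉ K → ∀ σ, dS (dS f) y σ = 0 := by
    intro y hy σ
    have e : (fun τ => dS f y τ) = fun _ => (0:ℝ) := funext fun τ => hdSK hy τ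
    show deriv (fun τ => dS f y τ) σ = 0
    rw [e]; simp
  have hdYYI : ∀ {σ : ℝ}, σ ∉ Set.Icc (-1:ℝ) 1 → ∀ y, dY (dY f) y σ = 0 := by
    intro σ hσ y
    have e : (fun t => dY f t σ) = fun _ => (0:ℝ) := funext fun t => hdYI hσ t
    show deriv (fun t => dY f t σ) y = 0
    rw [e]; simp
  have hdYSI : ∀ {σ : ℝ}, σ ∉ Set.Icc (-1:ℝ) 1 → ∀ y, dY (dS f) y σ = 0 := by
    intro σ hσ y
    have e : (fun t => dS f t σ) = fun _ => (0:ℝ) := funext fun t => hdSI hσ t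
    show deriv (fun t => dS f t σ) y = 0
    rw [e]; simp
  have hdSYI : ∀ {σ : ℝ}, σ ∉ Set.Icc (-1:ℝ) 1 → ∀ y, dS (dY f) y σ = 0 := fun {σ} hσ y =>
    S8.deriv_eventually_zero (by
      filter_upwards [hIopen.mem_nhds hσ] with τ hτ using hdYI hτ y)
  have hdSSI : ∀ {σ : ℝ}, σ ∉ Set.Icc (-1:ℝ) 1 → ∀ y, dS (dS f) y σ = 0 := fun {σ} hσ y =>
    S8.deriv_eventually_zero (by
      filter_upwards [hIopen.mem_nhds hσ] with τ hτ using hdSI hτ y)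
  -- lateral boundary: dY f vanishes at σ = ±1
  have hdY1 : ∀ y, dY f y 1 = 0 := by
    intro y
    have e : (fun t => f t 1) = fun _ => (0:ℝ) := funext fun t => (hbd t).1
    show deriv (fun t => f t 1) y = 0
    rw [e]; simp
  have hdYm1 : ∀ y, dY f y (-1) = 0 := by
    intro y
    have e : (fun t => f t (-1)) = fun _ => (0:ℝ) := funext fun t => (hbd t).2
    show deriv (fun t => f t (-1)) y = 0
    rw [e]; simp
  -- boundary values of Q
  have hQ1 : ∀ y, S8.Qf f y 1 = -((dS f y 1)^2) := by
    intro y; simp only [S8.Qf, (hbd y).1, hdY1 y]; ring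
  have hQm1 : ∀ y, S8.Qf f y (-1) = (dS f y (-1))^2 := by
    intro y; simp only [S8.Qf, (hbd y).2, hdYm1 y]; ring
  -- interval integrability in σ at each fixed y
  have iB : ∀ y, IntervalIntegrable
      (fun σ => 2 * ((dY f y σ)^2 + (dS f y σ)^2)) volume (-1) 1 := by
    intro y
    apply Continuous.intervalIntegrable
    have c1 := S8.contS h1 y; have c2 := S8.contS h2 y
    fun_prop
  have iPY : ∀ y, IntervalIntegrable (fun σ => S8.PYf f y σ) volume (-1) 1 := by
    intro y
    apply Continuous.intervalIntegrable
    have c0 := S8.contS hUf y; have c1 := S8.contS h1 y; have c2 := S8.contS h2 y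
    have c3 := S8.contS h11 y; have c4 := S8.contS h21 y
    simp only [S8.PYf]; fun_prop
  have iQS : ∀ y, IntervalIntegrable (fun σ => S8.QSf f y σ) volume (-1) 1 := by
    intro y
    apply Continuous.intervalIntegrable
    have c0 := S8.contS hUf y; have c1 := S8.contS h1 y; have c2 := S8.contS h2 y
    have c3 := S8.contS h12 y; have c4 := S8.contS h22 y
    simp only [S8.QSf]; fun_prop
  -- FTC in the transverse direction
  have hFTC : ∀ y, (∫ σ in (-1:ℝ)..1, S8.QSf f y σ)
      = -((dS f y 1)^2 + (dS f y (-1))^2) := by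
    intro y
    rw [integral_eq_sub_of_hasDerivAt (fun σ _ => S8.hasDerivAt_Q hUf y σ) (iQS y),
      hQ1 y, hQm1 y]
    ring
  -- inner identity at each fixed y
  have hii : ∀ y : ℝ, (∫ σ in (-1:ℝ)..1,
        2 * ((-(dY (dY f) y σ + dS (dS f) y σ)) * (y * dY f y σ + σ * dS f y σ + f y σ)))
      = (∫ σ in (-1:ℝ)..1, 2 * ((dY f y σ)^2 + (dS f y σ)^2))
        + (∫ σ in (-1:ℝ)..1, S8.PYf f y σ)
        - ((dS f y 1)^2 + (dS f y (-1))^2) := by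
    intro y
    rw [intervalIntegral.integral_congr
        (g := fun σ => 2 * ((dY f y σ)^2 + (dS f y σ)^2) + S8.PYf f y σ + S8.QSf f y σ)
        (fun σ _ => S8.pointwise hUf y σ)]
    rw [intervalIntegral.integral_add ((iB y).add (iPY y)) (iQS y),
      intervalIntegral.integral_add (iB y) (iPY y), hFTC y]
    ring
  -- uncurried continuity
  have c1 : Continuous (fun p : ℝ × ℝ => dY f p.1 p.2) := h1.continuous
  have c2 : Continuous (fun p : ℝ × ℝ => dS f p.1 p.2) := h2.continuous
  have c0 : Continuous (fun p : ℝ × ℝ => f p.1 p.2) := hUf.continuous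
  have c11 : Continuous (fun p : ℝ × ℝ => dY (dY f) p.1 p.2) := h11.continuous
  have c21 : Continuous (fun p : ℝ × ℝ => dY (dS f) p.1 p.2) := h21.continuous
  -- product integrability
  have hBint : Integrable (fun p : ℝ × ℝ => 2 * ((dY f p.1 p.2)^2 + (dS f p.1 p.2)^2))
      ((volume : Measure ℝ).prod (volume.restrict (Set.Ioc (-1:ℝ) 1))) := by
    apply S8.prodInt _ (by fun_prop) K hK
    intro p hp
    constructor
    · by_contra h; exact hp (by simp [hdYK h, hdSK h])
    · by_contra h; exact hp (by simp [hdYI h, hdSI h])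
  have hPYint : Integrable (fun p : ℝ × ℝ => S8.PYf f p.1 p.2)
      ((volume : Measure ℝ).prod (volume.restrict (Set.Ioc (-1:ℝ) 1))) := by
    apply S8.prodInt _ (by simp only [S8.PYf]; fun_prop) K hK
    intro p hp
    constructor
    · by_contra h
      exact hp (by simp [S8.PYf, hdYK h, hdSK h, hyK h, hdYYK h, hdYSK h])
    · by_contra h
      exact hp (by simp [S8.PYf, hdYI h, hdSI h, hsI h, hdYYI h, hdYSI h])
  -- conversion of interval integrals to integrals against the restricted measure
  have convB : (fun y : ℝ => ∫ σ in (-1:ℝ)..1, 2 * ((dY f y σ)^2 + (dS f y σ)^2))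
      = fun y : ℝ => ∫ σ, (fun p : ℝ × ℝ => 2 * ((dY f p.1 p.2)^2 + (dS f p.1 p.2)^2)) (y, σ)
        ∂(volume.restrict (Set.Ioc (-1:ℝ) 1)) := by
    funext y
    rw [intervalIntegral.integral_of_le (by norm_num : (-1:ℝ) ≤ 1)]
  have convPY : (fun y : ℝ => ∫ σ in (-1:ℝ)..1, S8.PYf f y σ)
      = fun y : ℝ => ∫ σ, (fun p : ℝ × ℝ => S8.PYf f p.1 p.2) (y, σ)
        ∂(volume.restrict (Set.Ioc (-1:ℝ) 1)) := by
    funext y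
    rw [intervalIntegral.integral_of_le (by norm_num : (-1:ℝ) ≤ 1)]
  -- integrability of the outer integrands
  have hg2int : Integrable (fun y : ℝ => ∫ σ in (-1:ℝ)..1,
      2 * ((dY f y σ)^2 + (dS f y σ)^2)) volume := by
    rw [convB]; exact hBint.integral_prod_left
  have hg3int : Integrable (fun y : ℝ => ∫ σ in (-1:ℝ)..1, S8.PYf f y σ) volume := by
    rw [convPY]; exact hPYint.integral_prod_left
  have hbdint : Integrable (fun y : ℝ => (dS f y 1)^2 + (dS f y (-1))^2) volume := by
    apply Continuous.integrable_of_hasCompactSupport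
    · have cA := S8.contY h2 1; have cB2 := S8.contY h2 (-1); fun_prop
    · exact HasCompactSupport.intro hK (fun y hy => by simp [hdSK hy])
  -- the longitudinal divergence term integrates to zero
  have hzero : (∫ y : ℝ, ∫ σ in (-1:ℝ)..1, S8.PYf f y σ) = 0 := by
    rw [convPY]
    rw [integral_integral_swap (f := fun y σ => (fun p : ℝ × ℝ => S8.PYf f p.1 p.2) (y, σ)) hPYint]
    have hz : ∀ σ : ℝ, (∫ y : ℝ, S8.PYf f y σ) = 0 := by
      intro σ
      have hP1 : ContDiff ℝ 1 (fun t => S8.Pf f t σ) := by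
        have s0 := (S8.cdY hUf σ).of_le (by decide : (1 : WithTop ℕ∞) ≤ ∞)
        have s1 := (S8.cdY h1 σ).of_le (by decide : (1 : WithTop ℕ∞) ≤ ∞)
        have s2 := (S8.cdY h2 σ).of_le (by decide : (1 : WithTop ℕ∞) ≤ ∞)
        simp only [S8.Pf]; fun_prop
      have hPc : HasCompactSupport (fun t => S8.Pf f t σ) :=
        HasCompactSupport.intro hK
          (fun t ht => by simp [S8.Pf, hdYK ht, hdSK ht, hyK ht])
      have e : (fun y => S8.PYf f y σ) = deriv (fun t => S8.Pf f t σ) :=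
        funext fun t => ((S8.hasDerivAt_P hUf t σ).deriv).symm
      rw [e]
      exact S8.integral_deriv_zero hP1 hPc
    simp [hz]
  -- assemble everything
  rw [← MeasureTheory.integral_const_mul]
  simp_rw [← intervalIntegral.integral_const_mul]
  rw [integral_congr_ae (Filter.Eventually.of_forall hii)]
  have hsum : Integrable (fun y : ℝ =>
      (∫ σ in (-1:ℝ)..1, 2 * ((dY f y σ)^2 + (dS f y σ)^2))
        + ∫ σ in (-1:ℝ)..1, S8.PYf f y σ) volume := hg2int.add hg3int
  rw [integral_sub hsum hbdint, integral_add hg2int hg3int, hzero]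
  have convB2 : (fun y : ℝ => ∫ σ in (-1:ℝ)..1, 2 * ((dY f y σ)^2 + (dS f y σ)^2))
      = fun y : ℝ => 2 * ∫ σ in (-1:ℝ)..1, ((dY f y σ)^2 + (dS f y σ)^2) := by
    funext y; rw [intervalIntegral.integral_const_mul]
  rw [convB2, MeasureTheory.integral_const_mul]
  ring
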